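/- arXiv:2502.05096 — 2 statements merged into one kernel-verified Lean document; each statement's English description precedes it below -/
import Mathlib

section
/- Let (C, C₋, C₊) be a Reedy category and (α, θ) : ([m], X) → ([n], Y) a morphism in ∫N^{-,+}(C). Let (α', θ') be the largest element of the set {(β, φ) : (α, θ) ≤ (β, φ)} (which exists). Then the map (β, φ) ↦ β is an order isomorphism from the poset {(β, φ) : (α, θ) ≤ (β, φ)} onto the closed interval {β : [m] → [n] in Δ with α ≤ β ≤ α' pointwise} (with the pointwise order). -/
namespace ReedyPaper

open CategoryTheory

universe v₂ u₂ v₁ u₁ v u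

variable {C : Type u} [Category.{v} C]

def IsIdMor {x y : C} (f : x ⟶ y) : Prop := ∃ h : x = y, f = eqToHom h

structure ReedyStruct (C : Type u) [Category.{v} C] where
  neg : MorphismProperty C
  pos : MorphismProperty C
  neg_id : ∀ x : C, neg (𝟙 x)
  pos_id : ∀ x : C, pos (𝟙 x)
  neg_comp : ∀ {x y z : C} (f : x ⟶ y) (g : y ⟶ z), neg f → neg g → neg (f ≫ g)
  pos_comp : ∀ {x y z : C} (f : x ⟶ y) (g : y ⟶ z), pos f → pos g → pos (f ≫ g)
  factor_existsUnique : ∀ {x y : C} (f : x ⟶ y),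
    ∃! t : Σ z : C, (x ⟶ z) × (z ⟶ y), neg t.2.1 ∧ pos t.2.2 ∧ t.2.1 ≫ t.2.2 = f
  wf : WellFounded (fun x y : C =>
    (∃ f : x ⟶ y, pos f ∧ ¬ IsIdMor f) ∨ (∃ f : y ⟶ x, neg f ∧ ¬ IsIdMor f))

structure ChainObj (C : Type u) [Category.{v} C] where
  n : ℕ
  X : Fin (n + 1) ⥤ C

structure ChainHom (P Q : ChainObj C) where
  α : Fin (P.n + 1) →o Fin (Q.n + 1)
  θ : ∀ i : Fin (P.n + 1), P.X.obj i ⟶ Q.X.obj (α i)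
  natural : ∀ {i j : Fin (P.n + 1)} (h : i ≤ j),
    P.X.map (homOfLE h) ≫ θ j = θ i ≫ Q.X.map (homOfLE (α.monotone h))

theorem ChainHom.ext' {P Q : ChainObj C} {f g : ChainHom P Q}
    (hα : f.α = g.α) (hθ : HEq f.θ g.θ) : f = g := by
  cases f; cases g; cases hα; cases hθ; rfl

def ChainHom.id (P : ChainObj C) : ChainHom P P where
  α := OrderHom.id
  θ i := 𝟙 _
  natural h := by exact (Category.comp_id _).trans (Category.id_comp _).symm

def ChainHom.comp {P Q S : ChainObj C} (f : ChainHom P Q) (g : ChainHom Q S) :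
    ChainHom P S where
  α := g.α.comp f.α
  θ i := f.θ i ≫ g.θ (f.α i)
  natural {i j} h := by
    show P.X.map (homOfLE h) ≫ f.θ j ≫ g.θ (f.α j) =
      (f.θ i ≫ g.θ (f.α i)) ≫ S.X.map (homOfLE (g.α.monotone (f.α.monotone h)))
    rw [← Category.assoc, f.natural h, Category.assoc, g.natural (f.α.monotone h),
      ← Category.assoc]

instance : Category (ChainObj C) where
  Hom := ChainHom
  id := ChainHom.id
  comp := ChainHom.comp
  id_comp f := ChainHom.ext' rfl (heq_of_eq (funext fun i => Category.id_comp _))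
  comp_id f := ChainHom.ext' rfl (heq_of_eq (funext fun i => Category.comp_id _))
  assoc f g h := ChainHom.ext' rfl (heq_of_eq (funext fun i => Category.assoc _ _ _))

/-- The partial order on the hom-sets of `∫N(C)` (and of `∫N^{-,+}(C)`):
`(α, θ) ≤ (α', θ')` iff `α ≤ α'` pointwise and `θ'ᵢ = Y(α(i) ≤ α'(i)) ∘ θᵢ` for all `i`. -/
def ChainHom.le {P Q : ChainObj C} (f g : ChainHom P Q) : Prop :=
  (∀ i, f.α i ≤ g.α i) ∧
    ∀ (i : Fin (P.n + 1)) (h : f.α i ≤ g.α i), g.θ i = f.θ i ≫ Q.X.map (homOfLE h)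

theorem ChainHom.le_comp_right {P Q S : ChainObj C} {f f' : P ⟶ Q} (g : Q ⟶ S)
    (h : ChainHom.le f f') : ChainHom.le (f ≫ g) (f' ≫ g) := by
  refine ⟨fun i => g.α.monotone (h.1 i), fun i hi => ?_⟩
  show f'.θ i ≫ g.θ (f'.α i) = (f.θ i ≫ g.θ (f.α i)) ≫ S.X.map (homOfLE hi)
  rw [h.2 i (h.1 i), Category.assoc, g.natural (h.1 i), ← Category.assoc]
  rfl

theorem ChainHom.le_comp_left {P Q S : ChainObj C} (f : P ⟶ Q) {g g' : Q ⟶ S}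
    (h : ChainHom.le g g') : ChainHom.le (f ≫ g) (f ≫ g') := by
  refine ⟨fun i => h.1 (f.α i), fun i hi => ?_⟩
  show f.θ i ≫ g'.θ (f.α i) = (f.θ i ≫ g.θ (f.α i)) ≫ S.X.map (homOfLE hi)
  rw [h.2 (f.α i) (h.1 (f.α i)), ← Category.assoc]
  rfl

/-- Objects of `∫N^{-,+}(C)`: chains all of whose morphisms lie in `C₋`. -/
structure NegObj (R : ReedyStruct C) where
  n : ℕ
  X : Fin (n + 1) ⥤ C
  negMap : ∀ {i j : Fin (n + 1)} (h : i ≤ j), R.neg (X.map (homOfLE h))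

variable {R : ReedyStruct C}

/-- The underlying object of `∫N(C)`. -/
def NegObj.chain (P : NegObj R) : ChainObj C := ⟨P.n, P.X⟩

/-- Morphisms of `∫N^{-,+}(C)`: morphisms of `∫N(C)` all of whose components lie in `C₊`. -/
def NegHomT (P Q : NegObj R) : Type v :=
  { f : P.chain ⟶ Q.chain // ∀ i, R.pos (f.θ i) }

def NegHomT.id (P : NegObj R) : NegHomT P P := ⟨𝟙 P.chain, fun _ => R.pos_id _⟩

def NegHomT.comp {P Q S : NegObj R} (f : NegHomT P Q) (g : NegHomT Q S) : NegHomT P S :=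
  ⟨f.1 ≫ g.1, fun i => by
    show R.pos (f.1.θ i ≫ g.1.θ (f.1.α i))
    exact R.pos_comp _ _ (f.2 i) (g.2 _)⟩

theorem NegHomT.id_comp {P Q : NegObj R} (f : NegHomT P Q) : (NegHomT.id P).comp f = f := by
  apply Subtype.ext
  show 𝟙 P.chain ≫ f.1 = f.1
  exact Category.id_comp f.1

theorem NegHomT.comp_id {P Q : NegObj R} (f : NegHomT P Q) : f.comp (NegHomT.id Q) = f := by
  apply Subtype.ext
  show f.1 ≫ 𝟙 Q.chain = f.1
  exact Category.comp_id f.1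

theorem NegHomT.comp_assoc {P Q S T : NegObj R} (f : NegHomT P Q) (g : NegHomT Q S)
    (h : NegHomT S T) : (f.comp g).comp h = f.comp (g.comp h) := by
  apply Subtype.ext
  show (f.1 ≫ g.1) ≫ h.1 = f.1 ≫ (g.1 ≫ h.1)
  exact Category.assoc f.1 g.1 h.1

/-- The category `∫N^{-,+}(C)`. -/
instance : Category (NegObj R) where
  Hom := NegHomT
  id := NegHomT.id
  comp := NegHomT.comp
  id_comp := NegHomT.id_comp
  comp_id := NegHomT.comp_id
  assoc := NegHomT.comp_assoc

/-- The order on the hom-sets of `∫N^{-,+}(C)`. -/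
def NegHom.le {P Q : NegObj R} (f g : P ⟶ Q) : Prop := ChainHom.le f.1 g.1

/-- The equivalence relation `∼` on the hom-sets of `∫N^{-,+}(C)`: the
symmetric-transitive closure of `≤`. -/
def NegHom.equiv {P Q : NegObj R} (f g : P ⟶ Q) : Prop :=
  Relation.EqvGen (fun a b : P ⟶ Q => NegHom.le a b) f g

theorem NegHom.le_comp_right {P Q S : NegObj R} {f f' : P ⟶ Q} (g : Q ⟶ S)
    (h : NegHom.le f f') : NegHom.le (f ≫ g) (f' ≫ g) :=
  ChainHom.le_comp_right g.1 h

theorem NegHom.le_comp_left {P Q S : NegObj R} (f : P ⟶ Q) {g g' : Q ⟶ S}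
    (h : NegHom.le g g') : NegHom.le (f ≫ g) (f ≫ g') :=
  ChainHom.le_comp_left f.1 h

/-- Identity-reflectingness of a chain. -/
def NegObj.IdRefl (P : NegObj R) : Prop :=
  ∀ {i j : Fin (P.n + 1)} (h : i ≤ j), IsIdMor (P.X.map (homOfLE h)) → i = j

/-- Objects of `∫N^{--,+}_+(C)`: identity-reflecting chains in `C₋`. -/
structure StrictObj (R : ReedyStruct C) where
  toNegObj : NegObj R
  idRefl : toNegObj.IdRefl

/-- Morphisms of `∫N^{--,+}_+(C)`: morphisms of `∫N^{-,+}(C)` with `α` injective. -/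
def StrictHomT (P Q : StrictObj R) : Type v :=
  { f : P.toNegObj ⟶ Q.toNegObj // Function.Injective f.1.α }

def StrictHomT.id (P : StrictObj R) : StrictHomT P P :=
  ⟨𝟙 P.toNegObj, fun _ _ h => h⟩

def StrictHomT.comp {P Q S : StrictObj R} (f : StrictHomT P Q) (g : StrictHomT Q S) :
    StrictHomT P S :=
  ⟨f.1 ≫ g.1, fun _ _ h => f.2 (g.2 h)⟩

/-- The category `∫N^{--,+}_+(C)`. -/
instance : Category (StrictObj R) where
  Hom := StrictHomT
  id := StrictHomT.id
  comp := StrictHomT.comp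
  id_comp f := Subtype.ext (Category.id_comp f.1)
  comp_id f := Subtype.ext (Category.comp_id f.1)
  assoc f g h := Subtype.ext (Category.assoc f.1 g.1 h.1)

/-- The order on the hom-sets of `∫N^{--,+}_+(C)`. -/
def StrictHom.le {P Q : StrictObj R} (f g : P ⟶ Q) : Prop := NegHom.le f.1 g.1

/-- The equivalence relation `∼` on the hom-sets of `∫N^{--,+}_+(C)`. -/
def StrictHom.equiv {P Q : StrictObj R} (f g : P ⟶ Q) : Prop :=
  Relation.EqvGen (fun a b : P ⟶ Q => StrictHom.le a b) f g

theorem StrictHom.le_comp_right {P Q S : StrictObj R} {f f' : P ⟶ Q} (g : Q ⟶ S)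
    (h : StrictHom.le f f') : StrictHom.le (f ≫ g) (f' ≫ g) :=
  NegHom.le_comp_right g.1 h

theorem StrictHom.le_comp_left {P Q S : StrictObj R} (f : P ⟶ Q) {g g' : Q ⟶ S}
    (h : StrictHom.le g g') : StrictHom.le (f ≫ g) (f ≫ g') :=
  NegHom.le_comp_left f.1 h

/-- Objects of `Down_*(C)`: the same as those of `∫N^{-,+}(C)`. -/
structure DownStar (R : ReedyStruct C) where
  obj : NegObj R

/-- The category `Down_*(C)`: hom-sets are the quotients of those of `∫N^{-,+}(C)`
by the symmetric-transitive closure of `≤`. -/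
instance : Category (DownStar R) where
  Hom P Q := Quot (fun f g : P.obj ⟶ Q.obj => NegHom.le f g)
  id P := Quot.mk _ (𝟙 P.obj)
  comp {P Q S} f g :=
    Quot.lift
      (fun f' => Quot.lift (fun g' => Quot.mk _ (f' ≫ g'))
        (fun _ _ hg => Quot.sound (NegHom.le_comp_left f' hg)) g)
      (fun f₁ f₂ hf => Quot.inductionOn g (fun g' =>
        Quot.sound (NegHom.le_comp_right g' hf))) f
  id_comp f := Quot.inductionOn f fun f' => congrArg (Quot.mk _) (Category.id_comp f')
  comp_id f := Quot.inductionOn f fun f' => congrArg (Quot.mk _) (Category.comp_id f')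
  assoc f g h :=
    Quot.inductionOn f fun f' => Quot.inductionOn g fun g' => Quot.inductionOn h fun h' =>
      congrArg (Quot.mk _) (Category.assoc f' g' h')

/-- Objects of `Down(C)`: the same as those of `∫N^{--,+}_+(C)`. -/
structure Down (R : ReedyStruct C) where
  obj : StrictObj R

/-- The category `Down(C)`: hom-sets are the quotients of those of `∫N^{--,+}_+(C)`
by the symmetric-transitive closure of `≤`. -/
instance : Category (Down R) where
  Hom P Q := Quot (fun f g : P.obj ⟶ Q.obj => StrictHom.le f g)
  id P := Quot.mk _ (𝟙 P.obj)
  comp {P Q S} f g :=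
    Quot.lift
      (fun f' => Quot.lift (fun g' => Quot.mk _ (f' ≫ g'))
        (fun _ _ hg => Quot.sound (StrictHom.le_comp_left f' hg)) g)
      (fun f₁ f₂ hf => Quot.inductionOn g (fun g' =>
        Quot.sound (StrictHom.le_comp_right g' hf))) f
  id_comp f := Quot.inductionOn f fun f' => congrArg (Quot.mk _) (Category.id_comp f')
  comp_id f := Quot.inductionOn f fun f' => congrArg (Quot.mk _) (Category.comp_id f')
  assoc f g h :=
    Quot.inductionOn f fun f' => Quot.inductionOn g fun g' => Quot.inductionOn h fun h' =>
      congrArg (Quot.mk _) (Category.assoc f' g' h')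

/-- The quotient functor `∫N^{-,+}(C) → Down_*(C)`. -/
def qStar (R : ReedyStruct C) : NegObj R ⥤ DownStar R where
  obj P := ⟨P⟩
  map f := Quot.mk _ f
  map_id _ := rfl
  map_comp _ _ := rfl

/-- The inclusion functor `Down(C) → Down_*(C)`. -/
def downInclusion (R : ReedyStruct C) : Down R ⥤ DownStar R where
  obj P := ⟨P.obj.toNegObj⟩
  map {P Q} f :=
    Quot.lift (fun f' : P.obj ⟶ Q.obj => Quot.mk _ f'.1) (fun _ _ h => Quot.sound h) f
  map_id _ := rfl
  map_comp {P Q S} f g := by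
    induction f using Quot.ind
    induction g using Quot.ind
    rfl

/-- The last-component functor `∫N(C) → C`. -/
def lastChain : ChainObj C ⥤ C where
  obj P := P.X.obj (Fin.last P.n)
  map {P Q} f := f.θ (Fin.last P.n) ≫ Q.X.map (homOfLE (Fin.le_last (f.α (Fin.last P.n))))
  map_id P := by
    show 𝟙 (P.X.obj (Fin.last P.n)) ≫ P.X.map (homOfLE (Fin.le_last (Fin.last P.n))) = 𝟙 _
    rw [Category.id_comp]
    exact P.X.map_id _
  map_comp {P Q S} f g := by
    show (f.θ (Fin.last P.n) ≫ g.θ (f.α (Fin.last P.n))) ≫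
        S.X.map (homOfLE (Fin.le_last (g.α (f.α (Fin.last P.n))))) =
      (f.θ (Fin.last P.n) ≫ Q.X.map (homOfLE (Fin.le_last (f.α (Fin.last P.n))))) ≫
        g.θ (Fin.last Q.n) ≫ S.X.map (homOfLE (Fin.le_last (g.α (Fin.last Q.n))))
    rw [Category.assoc, Category.assoc, ← Category.assoc (Q.X.map _),
      g.natural (Fin.le_last (f.α (Fin.last P.n))), Category.assoc, ← Functor.map_comp,
      homOfLE_comp]

theorem lastChain_eq_of_le {P Q : ChainObj C} {f g : P ⟶ Q} (h : ChainHom.le f g) :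
    lastChain.map f = lastChain.map g := by
  show f.θ (Fin.last P.n) ≫ Q.X.map (homOfLE (Fin.le_last (f.α (Fin.last P.n)))) =
    g.θ (Fin.last P.n) ≫ Q.X.map (homOfLE (Fin.le_last (g.α (Fin.last P.n))))
  rw [h.2 (Fin.last P.n) (h.1 (Fin.last P.n)), Category.assoc, ← Functor.map_comp,
    homOfLE_comp]

/-- The forgetful functor `∫N^{-,+}(C) → ∫N(C)`. -/
def negForget (R : ReedyStruct C) : NegObj R ⥤ ChainObj C where
  obj P := P.chain
  map f := f.1
  map_id _ := rfl
  map_comp _ _ := rfl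

/-- The last-component functor `∫N^{-,+}(C) → C`. -/
def lastNeg (R : ReedyStruct C) : NegObj R ⥤ C := negForget R ⋙ lastChain

/-- The forgetful functor `∫N^{--,+}_+(C) → ∫N^{-,+}(C)`. -/
def strictForget (R : ReedyStruct C) : StrictObj R ⥤ NegObj R where
  obj P := P.toNegObj
  map f := f.1
  map_id _ := rfl
  map_comp _ _ := rfl

/-- The last-component functor `∫N^{--,+}_+(C) → C`. -/
def lastStrict (R : ReedyStruct C) : StrictObj R ⥤ C := strictForget R ⋙ lastNeg R

/-- The last-component functor `Down_*(C) → C`. -/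
def lastDownStar (R : ReedyStruct C) : DownStar R ⥤ C where
  obj P := (lastNeg R).obj P.obj
  map {P Q} f :=
    Quot.lift (fun f' : P.obj ⟶ Q.obj => (lastNeg R).map f')
      (fun _ _ h => lastChain_eq_of_le h) f
  map_id P := (lastNeg R).map_id P.obj
  map_comp {P Q S} f g := by
    induction f using Quot.ind
    induction g using Quot.ind
    exact (lastNeg R).map_comp _ _

/-- The last-component functor `Down(C) → C`. -/
def lastDown (R : ReedyStruct C) : Down R ⥤ C where
  obj P := (lastStrict R).obj P.obj
  map {P Q} f :=
    Quot.lift (fun f' : P.obj ⟶ Q.obj => (lastStrict R).map f')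
      (fun _ _ h => lastChain_eq_of_le h) f
  map_id P := (lastStrict R).map_id P.obj
  map_comp {P Q S} f g := by
    induction f using Quot.ind
    induction g using Quot.ind
    exact (lastStrict R).map_comp _ _

/-- The wide subcategory `Γ₋` of `∫N^{-,+}(C)`: morphisms of the form
`(σ, id) : ([m], X ∘ σ) → ([n], X)` with `σ` surjective, i.e. morphisms whose simplicial
component is surjective and all of whose components are identities. -/
def GammaNeg (R : ReedyStruct C) {P Q : NegObj R} (f : P ⟶ Q) : Prop :=
  Function.Surjective f.1.α ∧ ∀ i, IsIdMor (f.1.θ i)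

/-- The wide subcategory `Γ₊` of `∫N^{-,+}(C)`: morphisms `(δ, θ)` with `δ` injective. -/
def GammaPos (R : ReedyStruct C) {P Q : NegObj R} (f : P ⟶ Q) : Prop :=
  Function.Injective f.1.α

/-- Whiskering (precomposition) with `lastF` is bijective on natural transformations
between functors out of `C`. -/
def WhiskerUnique {Γ : Type u₁} [Category.{v₁} Γ] (lastF : Γ ⥤ C) : Prop :=
  ∀ {D : Type u₂} [Category.{v₂} D] (F G : C ⥤ D)
    (ε : lastF ⋙ F ⟶ lastF ⋙ G), ∃! ε' : F ⟶ G, Functor.whiskerLeft lastF ε' = ε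

/-- `lastF : Γ ⥤ C` is a weak 1-localization of `Γ` at the `last`-weak equivalences
(the morphisms sent by `lastF` to identities). -/
def IsWeakLocalizationAtLastWeq {Γ : Type u₁} [Category.{v₁} Γ] (lastF : Γ ⥤ C) : Prop :=
  (∀ {P Q : Γ} (f : P ⟶ Q), IsIdMor (lastF.map f) → IsIso (lastF.map f)) ∧
  (∀ {E : Type u₂} [Category.{v₂} E] (G : Γ ⥤ E),
    (∀ {P Q : Γ} (f : P ⟶ Q), IsIdMor (lastF.map f) → IsIso (G.map f)) →
    ∃ H : C ⥤ E, Nonempty (lastF ⋙ H ≅ G)) ∧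
  (∀ {E : Type u₂} [Category.{v₂} E] (H H' : C ⥤ E) (θ : lastF ⋙ H ≅ lastF ⋙ H'),
    ∃! θ' : H ≅ H', Functor.isoWhiskerLeft lastF θ' = θ)

/-!
For each `i`, the `j ≥ α(i)` with `Y(α(i) ≤ j) ∘ θᵢ ∈ C₊` form an initial segment of `[α(i), n]`,
because in a Reedy category `g ∘ f ∈ C₊` implies `f ∈ C₊`; its maximum `m(i)` is monotone in `i`
because `g ∘ f ∈ C₊` with `f ∈ C₋` implies `g ∈ C₊`, and the maps of `X` lie in `C₋`. A morphism
`(β, φ) ≥ (α, θ)` is determined by `β`, since `φᵢ = Y(α(i) ≤ β(i)) ∘ θᵢ`, and such a `φ` lands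
in `C₊` exactly when `β ≤ m`. Hence `(m, Y(α ≤ m) ∘ θ)` is the largest element, and
`(β, φ) ↦ β` is an order isomorphism onto `[α, m]`.
-/

namespace ReedyStruct

variable (R : ReedyStruct C)

/-- By well-foundedness of `<'`, a loop `a → z → a` cannot consist of two non-identities of `C₋`. -/
theorem isIdMor_of_neg_comp_eq_id {a z : C} {n : a ⟶ z} {n' : z ⟶ a} (hn : R.neg n)
    (hn' : R.neg n') (h : n ≫ n' = 𝟙 a) : IsIdMor n ∧ IsIdMor n' := by
  by_cases h₁ : IsIdMor n
  · obtain ⟨rfl, rfl⟩ := h₁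
    rw [eqToHom_refl, Category.id_comp] at h
    exact ⟨⟨rfl, rfl⟩, ⟨rfl, h⟩⟩
  by_cases h₂ : IsIdMor n'
  · obtain ⟨rfl, rfl⟩ := h₂
    rw [eqToHom_refl, Category.comp_id] at h
    exact absurd ⟨rfl, h⟩ h₁
  · exact (R.wf.asymmetric z a (Or.inr ⟨n, hn, h₁⟩) (Or.inr ⟨n', hn', h₂⟩)).elim

/-- `n ≫ w` and `𝟙 ≫ (n ≫ w)` are two factorizations of the same morphism. -/
theorem isIdMor_of_neg_of_comp_pos {x y z : C} {n : x ⟶ z} {w : z ⟶ y} (hn : R.neg n)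
    (hw : R.pos w) (h : R.pos (n ≫ w)) : IsIdMor n := by
  obtain ⟨t, -, huniq⟩ := R.factor_existsUnique (n ≫ w)
  have key : (⟨z, (n, w)⟩ : Σ z : C, (x ⟶ z) × (z ⟶ y)) = ⟨x, (𝟙 x, n ≫ w)⟩ :=
    (huniq _ ⟨hn, hw, rfl⟩).trans (huniq _ ⟨R.neg_id x, h, Category.id_comp _⟩).symm
  obtain ⟨rfl, hpair⟩ := Sigma.mk.inj key
  exact ⟨rfl, by rw [(Prod.mk.inj (eq_of_heq hpair)).1, eqToHom_refl]⟩

theorem pos_of_postcomp {a b c : C} {u : a ⟶ b} {v : b ⟶ c}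
    (h : R.pos (u ≫ v)) : R.pos u := by
  obtain ⟨⟨z, n, p⟩, ⟨hn, hp, rfl⟩, -⟩ := R.factor_existsUnique u
  dsimp only at hn hp h ⊢
  obtain ⟨⟨z₂, n₂, p₂⟩, ⟨hn₂, hp₂, he₂⟩, -⟩ := R.factor_existsUnique (p ≫ v)
  dsimp only at hn₂ hp₂ he₂
  have hc : (n ≫ n₂) ≫ p₂ = (n ≫ p) ≫ v := by simp only [Category.assoc, he₂]
  obtain ⟨rfl, hnn⟩ := R.isIdMor_of_neg_of_comp_pos (R.neg_comp _ _ hn hn₂) hp₂ (hc ▸ h)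
  rw [eqToHom_refl] at hnn
  obtain ⟨⟨rfl, rfl⟩, -⟩ := R.isIdMor_of_neg_comp_eq_id hn hn₂ hnn
  simpa using hp

theorem pos_of_precomp {a b c : C} {u : a ⟶ b} {v : b ⟶ c} (hu : R.neg u)
    (h : R.pos (u ≫ v)) : R.pos v := by
  obtain ⟨⟨z, n, p⟩, ⟨hn, hp, rfl⟩, -⟩ := R.factor_existsUnique v
  dsimp only at hn hp h ⊢
  obtain ⟨rfl, hun⟩ := R.isIdMor_of_neg_of_comp_pos (R.neg_comp _ _ hu hn) hp
    (by simpa only [Category.assoc] using h)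
  rw [eqToHom_refl] at hun
  obtain ⟨-, ⟨rfl, rfl⟩⟩ := R.isIdMor_of_neg_comp_eq_id hu hn hun
  simpa using hp

end ReedyStruct

namespace ChainHom

variable {P Q : ChainObj C}

def raise (f : ChainHom P Q) (β : Fin (P.n + 1) →o Fin (Q.n + 1)) (hβ : ∀ i, f.α i ≤ β i) :
    ChainHom P Q where
  α := β
  θ i := f.θ i ≫ Q.X.map (homOfLE (hβ i))
  natural {i j} h := by
    rw [← Category.assoc, f.natural h, Category.assoc, Category.assoc, ← Functor.map_comp,
      ← Functor.map_comp]
    rfl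

theorem le_raise (f : ChainHom P Q) (β : Fin (P.n + 1) →o Fin (Q.n + 1))
    (hβ : ∀ i, f.α i ≤ β i) : f.le (f.raise β hβ) :=
  ⟨hβ, fun _ _ => rfl⟩

theorem eq_raise_of_le {f g : ChainHom P Q} (h : f.le g) : g = f.raise g.α h.1 :=
  ChainHom.ext' rfl (heq_of_eq (funext fun i => h.2 i (h.1 i)))

theorem ext_of_le {f g g' : ChainHom P Q} (hg : f.le g) (hg' : f.le g') (hα : g.α = g'.α) :
    g = g' := by
  rw [eq_raise_of_le hg, eq_raise_of_le hg']
  congr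

theorem le_iff_of_le {f g g' : ChainHom P Q} (hg : f.le g) (hg' : f.le g') :
    g.le g' ↔ ∀ i, g.α i ≤ g'.α i := by
  refine ⟨fun h => h.1, fun h => ⟨h, fun i hi => ?_⟩⟩
  rw [hg'.2 i (hg'.1 i), hg.2 i (hg.1 i), Category.assoc, ← Functor.map_comp]
  rfl

end ChainHom

namespace NegHom

variable {P Q : NegObj R}

def Reaches (f : P ⟶ Q) (i : Fin (P.n + 1)) (j : Fin (Q.n + 1)) : Prop :=
  ∃ h : f.1.α i ≤ j, R.pos (f.1.θ i ≫ Q.X.map (homOfLE h))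

theorem reaches_self (f : P ⟶ Q) (i : Fin (P.n + 1)) : Reaches f i (f.1.α i) :=
  ⟨le_rfl, by erw [Q.X.map_id, Category.comp_id]; exact f.2 i⟩

theorem Reaches.of_le_right {f : P ⟶ Q} {i : Fin (P.n + 1)} {j k : Fin (Q.n + 1)}
    (hk : Reaches f i k) (hj : f.1.α i ≤ j) (hjk : j ≤ k) : Reaches f i j := by
  refine ⟨hj, R.pos_of_postcomp (v := Q.X.map (homOfLE hjk)) ?_⟩
  erw [Category.assoc, ← Functor.map_comp]
  exact hk.2

theorem Reaches.of_le_left {f : P ⟶ Q} {i i' : Fin (P.n + 1)} {k : Fin (Q.n + 1)}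
    (hk : Reaches f i k) (hii' : i ≤ i') (hk' : f.1.α i' ≤ k) : Reaches f i' k := by
  refine ⟨hk', R.pos_of_precomp (P.negMap hii') ?_⟩
  erw [← Category.assoc, f.1.natural hii', Category.assoc, ← Functor.map_comp]
  exact hk.2

open Classical in
noncomputable def maxReach (f : P ⟶ Q) (i : Fin (P.n + 1)) : Fin (Q.n + 1) :=
  (Finset.univ.filter (Reaches f i)).max'
    ⟨_, Finset.mem_filter.2 ⟨Finset.mem_univ _, reaches_self f i⟩⟩

theorem reaches_maxReach (f : P ⟶ Q) (i : Fin (P.n + 1)) : Reaches f i (maxReach f i) := by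
  classical
  exact (Finset.mem_filter.1 (Finset.max'_mem _ _)).2

theorem le_maxReach {f : P ⟶ Q} {i : Fin (P.n + 1)} {j : Fin (Q.n + 1)} (hj : Reaches f i j) :
    j ≤ maxReach f i := by
  classical
  exact Finset.le_max' _ j (Finset.mem_filter.2 ⟨Finset.mem_univ _, hj⟩)

theorem reaches_iff {f : P ⟶ Q} {i : Fin (P.n + 1)} {j : Fin (Q.n + 1)} :
    Reaches f i j ↔ f.1.α i ≤ j ∧ j ≤ maxReach f i :=
  ⟨fun hj => ⟨hj.1, le_maxReach hj⟩, fun hj => (reaches_maxReach f i).of_le_right hj.1 hj.2⟩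

theorem monotone_maxReach (f : P ⟶ Q) : Monotone (maxReach f) := by
  intro i i' hii'
  rcases le_total (maxReach f i) (f.1.α i') with h | h
  · exact h.trans (reaches_maxReach f i').1
  · exact le_maxReach ((reaches_maxReach f i).of_le_left hii' h)

def raise (f : P ⟶ Q) (β : Fin (P.n + 1) →o Fin (Q.n + 1)) (hβ : ∀ i, f.1.α i ≤ β i)
    (hβ' : ∀ i, β i ≤ maxReach f i) : P ⟶ Q :=
  ⟨f.1.raise β hβ, fun i => (reaches_iff.2 ⟨hβ i, hβ' i⟩).2⟩

theorem le_maxReach_of_le {f g : P ⟶ Q} (h : NegHom.le f g) (i : Fin (P.n + 1)) :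
    g.1.α i ≤ maxReach f i :=
  le_maxReach ⟨h.1 i, h.2 i (h.1 i) ▸ g.2 i⟩

end NegHom

section Statements

variable (R : ReedyStruct C)

theorem statement5 {P Q : NegObj R} (f : P ⟶ Q) :
    ∃ (g₀ : P ⟶ Q) (hmax : NegHom.le f g₀ ∧ ∀ g : P ⟶ Q, NegHom.le f g → NegHom.le g g₀),
      Function.Bijective
        (fun g : {g : P ⟶ Q // NegHom.le f g} =>
          (⟨g.1.1.α, fun i => g.2.1 i, fun i => (hmax.2 g.1 g.2).1 i⟩ :
            {β : Fin (P.n + 1) →o Fin (Q.n + 1) //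
              (∀ i, f.1.α i ≤ β i) ∧ ∀ i, β i ≤ g₀.1.α i})) ∧
      ∀ a b : {g : P ⟶ Q // NegHom.le f g},
        NegHom.le a.1 b.1 ↔ ∀ i, a.1.1.α i ≤ b.1.1.α i := by
  let m : Fin (P.n + 1) →o Fin (Q.n + 1) := ⟨NegHom.maxReach f, NegHom.monotone_maxReach f⟩
  have hfm : ∀ i, f.1.α i ≤ m i := fun i => (NegHom.reaches_maxReach f i).1
  let g₀ : P ⟶ Q := NegHom.raise f m hfm fun _ => le_rfl
  have hle₀ : NegHom.le f g₀ := ChainHom.le_raise _ _ _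
  have hmax : ∀ g : P ⟶ Q, NegHom.le f g → NegHom.le g g₀ := fun g hg =>
    (ChainHom.le_iff_of_le hg hle₀).2 (NegHom.le_maxReach_of_le hg)
  refine ⟨g₀, ⟨hle₀, hmax⟩, ⟨fun a b hab => ?_, fun ⟨β, hβ, hβ'⟩ => ?_⟩,
    fun a b => ChainHom.le_iff_of_le a.2 b.2⟩
  · exact Subtype.ext (Subtype.ext (ChainHom.ext_of_le a.2 b.2 congr($hab.1)))
  · exact ⟨⟨NegHom.raise f β hβ hβ', ChainHom.le_raise _ _ _⟩, rfl⟩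

end Statements

end ReedyPaper
end

section
/- Let (C, C₋, C₊) be a Reedy category and (α, θ), (α', θ') : ([m], X) → ([n], Y) a parallel pair of morphisms in ∫N^{-,+}(C). Then the following are equivalent: (1) (α, θ) ∼ (α', θ'); (2) (α, θ) and (α', θ') have a common upper bound with respect to ≤; (3) the largest elements of {(β, φ) : (α, θ) ≤ (β, φ)} and of {(β, φ) : (α', θ') ≤ (β, φ)} (which exist) coincide. -/
namespace ReedyPaper

open CategoryTheory

universe v₂ u₂ v₁ u₁ v u

variable {C : Type u} [Category.{v} C]

variable {R : ReedyStruct C}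

/-! The greatest morphism above `(α, θ)` is obtained by pushing each `α i` as far up as
`θᵢ ≫ Y(α i ≤ j)` stays in `C₊`. These indices are monotone in `i` because a `C₋`-map can be
cancelled on the left of a `C₊`-map, which follows from unique factorization and
well-foundedness. Once every morphism has a greatest morphism above it, two morphisms are
`∼`-related iff they have the same greatest morphism above them iff they have a common upper
bound. -/

theorem isGreatest_Ici_of_le {α : Type*} [Preorder α] {a b m : α} (hab : a ≤ b)
    (hm : IsGreatest (Set.Ici a) m) : IsGreatest (Set.Ici b) m :=
  ⟨hm.2 hab, fun _ hg => hm.2 (hab.trans hg)⟩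

theorem isGreatest_Ici_iff_of_le {α : Type*} [PartialOrder α]
    (hmax : ∀ a : α, ∃ m, IsGreatest (Set.Ici a) m) {a b m : α} (hab : a ≤ b) :
    IsGreatest (Set.Ici a) m ↔ IsGreatest (Set.Ici b) m := by
  refine ⟨isGreatest_Ici_of_le hab, fun hm => ?_⟩
  obtain ⟨m', hm'⟩ := hmax a
  rwa [hm.unique (isGreatest_Ici_of_le hab hm')]

theorem tfae_eqvGen_le {α : Type*} [PartialOrder α]
    (hmax : ∀ a : α, ∃ m, IsGreatest (Set.Ici a) m) (a b : α) :
    List.TFAE [Relation.EqvGen (· ≤ ·) a b, ∃ c, a ≤ c ∧ b ≤ c,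
      ∀ m m', IsGreatest (Set.Ici a) m → IsGreatest (Set.Ici b) m' → m = m'] := by
  tfae_have 1 → 3 := by
    intro h
    have same_greatest : IsGreatest (Set.Ici a) = IsGreatest (Set.Ici b) := by
      induction h with
      | rel _ _ hab => exact funext fun _ => propext (isGreatest_Ici_iff_of_le hmax hab)
      | refl => rfl
      | symm _ _ _ ih => exact ih.symm
      | trans _ _ _ _ _ ih₁ ih₂ => exact ih₁.trans ih₂
    exact fun m m' hm hm' => (same_greatest ▸ hm).unique hm'
  tfae_have 3 → 2 := by
    intro h
    obtain ⟨m, hm⟩ := hmax a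
    obtain ⟨m', hm'⟩ := hmax b
    exact ⟨m, hm.1, h m m' hm hm' ▸ hm'.1⟩
  tfae_have 2 → 1 := fun ⟨c, hac, hbc⟩ => .trans _ _ _ (.rel _ _ hac) (.symm _ _ (.rel _ _ hbc))
  tfae_finish

namespace ReedyStruct

variable (R : ReedyStruct C)

theorem isIdMor_or_isIdMor_of_neg {x y : C} {μ : x ⟶ y} {ν : y ⟶ x}
    (hμ : R.neg μ) (hν : R.neg ν) : IsIdMor μ ∨ IsIdMor ν := by
  by_contra! h
  exact R.wf.asymmetric y x (Or.inr ⟨μ, hμ, h.1⟩) (Or.inr ⟨ν, hν, h.2⟩)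

theorem pos_of_neg_comp {x y z : C} {μ : x ⟶ y} {v : y ⟶ z}
    (hμ : R.neg μ) (hμv : R.pos (μ ≫ v)) : R.pos v := by
  obtain ⟨⟨w, vneg, vpos⟩, ⟨hneg, hpos, hv⟩, -⟩ := R.factor_existsUnique v
  obtain ⟨_, -, huniq⟩ := R.factor_existsUnique (μ ≫ v)
  -- `(μ ≫ vneg, vpos)` and `(𝟙, μ ≫ v)` both factor `μ ≫ v`, so `w = x`.
  have hw : w = x := congrArg Sigma.fst <|
    (huniq ⟨w, (μ ≫ vneg, vpos)⟩ ⟨R.neg_comp _ _ hμ hneg, hpos, by rw [Category.assoc, hv]⟩).trans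
      (huniq ⟨x, (𝟙 x, μ ≫ v)⟩ ⟨R.neg_id x, hμv, Category.id_comp _⟩).symm
  subst hw
  rcases R.isIdMor_or_isIdMor_of_neg hμ hneg with ⟨rfl, rfl⟩ | ⟨rfl, rfl⟩
  · simpa using hμv
  · simpa [← hv] using hpos

end ReedyStruct

section Order

variable {P Q : ChainObj C}

theorem ChainHom.le_refl (f : ChainHom P Q) : ChainHom.le f f :=
  ⟨fun _ => _root_.le_refl _, fun _ _ => by simp [homOfLE_refl]⟩

theorem ChainHom.le_trans {f g h : ChainHom P Q} (hfg : ChainHom.le f g) (hgh : ChainHom.le g h) :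
    ChainHom.le f h :=
  ⟨fun i => (hfg.1 i).trans (hgh.1 i), fun i _ => by
    rw [hgh.2 i (hgh.1 i), hfg.2 i (hfg.1 i), Category.assoc, ← Functor.map_comp, homOfLE_comp]⟩

theorem ChainHom.le_antisymm {f g : ChainHom P Q} (hfg : ChainHom.le f g) (hgf : ChainHom.le g f) :
    f = g := by
  cases f with | mk α θ _ => cases g with | mk α' θ' _ =>
  obtain rfl : α = α' := OrderHom.ext _ _ (funext fun i => _root_.le_antisymm (hfg.1 i) (hgf.1 i))
  refine ChainHom.ext' rfl (heq_of_eq (funext fun i => ?_))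
  simpa [homOfLE_refl] using (hfg.2 i (_root_.le_refl _)).symm

instance {P Q : NegObj R} : PartialOrder (P ⟶ Q) where
  le := NegHom.le
  le_refl f := ChainHom.le_refl f.1
  le_trans _ _ _ := ChainHom.le_trans
  le_antisymm _ _ hfg hgf := Subtype.ext (ChainHom.le_antisymm hfg hgf)

end Order

def ChainHom.raise_s7 {P Q : ChainObj C} (f : ChainHom P Q) (M : Fin (P.n + 1) →o Fin (Q.n + 1))
    (hM : ∀ i, f.α i ≤ M i) : ChainHom P Q where
  α := M
  θ i := f.θ i ≫ Q.X.map (homOfLE (hM i))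
  natural h := by
    rw [← Category.assoc, f.natural h, Category.assoc, Category.assoc, ← Functor.map_comp,
      ← Functor.map_comp, homOfLE_comp, homOfLE_comp]

theorem ChainHom.le_raise_s7 {P Q : ChainObj C} (f : ChainHom P Q)
    (M : Fin (P.n + 1) →o Fin (Q.n + 1)) (hM : ∀ i, f.α i ≤ M i) :
    ChainHom.le f (f.raise_s7 M hM) :=
  ⟨hM, fun _ _ => rfl⟩

theorem ChainHom.le_raise_of_le {P Q : ChainObj C} {f g : ChainHom P Q}
    {M : Fin (P.n + 1) →o Fin (Q.n + 1)} {hM : ∀ i, f.α i ≤ M i} (hfg : ChainHom.le f g)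
    (hgM : ∀ i, g.α i ≤ M i) : ChainHom.le g (f.raise_s7 M hM) :=
  ⟨hgM, fun i _ => by
    rw [hfg.2 i (hfg.1 i), Category.assoc, ← Functor.map_comp, homOfLE_comp]
    rfl⟩

namespace NegHom

variable {P Q : NegObj R} (f : P ⟶ Q)

def PosExtends (i : Fin (P.chain.n + 1)) (j : Fin (Q.chain.n + 1)) : Prop :=
  ∃ h : f.1.α i ≤ j, R.pos (f.1.θ i ≫ Q.chain.X.map (homOfLE h))

theorem posExtends_self (i : Fin (P.chain.n + 1)) : PosExtends f i (f.1.α i) :=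
  ⟨le_rfl, by simpa [homOfLE_refl] using f.2 i⟩

theorem posExtends_of_le {f g : P ⟶ Q} (hfg : f ≤ g) (i : Fin (P.chain.n + 1)) :
    PosExtends f i (g.1.α i) :=
  ⟨hfg.1 i, hfg.2 i (hfg.1 i) ▸ g.2 i⟩

section MaxIndex

open Classical

noncomputable def maxIndex (i : Fin (P.chain.n + 1)) : Fin (Q.chain.n + 1) :=
  (Finset.univ.filter (PosExtends f i)).max'
    ⟨_, Finset.mem_filter.mpr ⟨Finset.mem_univ _, posExtends_self f i⟩⟩

theorem le_maxIndex {i : Fin (P.chain.n + 1)} {j : Fin (Q.chain.n + 1)} (h : PosExtends f i j) :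
    j ≤ maxIndex f i :=
  Finset.le_max' _ _ (Finset.mem_filter.mpr ⟨Finset.mem_univ _, h⟩)

theorem posExtends_maxIndex (i : Fin (P.chain.n + 1)) : PosExtends f i (maxIndex f i) :=
  (Finset.mem_filter.mp (Finset.max'_mem _ _)).2

end MaxIndex

theorem maxIndex_monotone : Monotone (maxIndex f) := by
  intro i j hij
  rcases le_total (maxIndex f i) (f.1.α j) with h | h
  · exact h.trans (le_maxIndex f (posExtends_self f j))
  · obtain ⟨hi, hpos⟩ := posExtends_maxIndex f i
    -- Cancel `X(i ≤ j) ∈ C₋` in `X(i ≤ j) ≫ θⱼ ≫ Y(α j ≤ M i) = θᵢ ≫ Y(α i ≤ M i) ∈ C₊`.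
    refine le_maxIndex f ⟨h, R.pos_of_neg_comp (μ := P.chain.X.map (homOfLE hij)) (P.negMap hij) ?_⟩
    rwa [← Category.assoc, f.1.natural hij, Category.assoc, ← Functor.map_comp, homOfLE_comp]

noncomputable def greatestAbove : P ⟶ Q :=
  ⟨f.1.raise_s7 ⟨maxIndex f, maxIndex_monotone f⟩ fun i => (posExtends_maxIndex f i).1,
    fun i => (posExtends_maxIndex f i).2⟩

theorem isGreatest_greatestAbove : IsGreatest (Set.Ici f) (greatestAbove f) :=
  ⟨ChainHom.le_raise_s7 _ _ _, fun _ hfg =>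
    ChainHom.le_raise_of_le hfg fun i => le_maxIndex f (posExtends_of_le hfg i)⟩

end NegHom

section Statements

variable (R : ReedyStruct C)

theorem statement7 {P Q : NegObj R} (f f' : P ⟶ Q) :
    (NegHom.equiv f f' ↔ ∃ h : P ⟶ Q, NegHom.le f h ∧ NegHom.le f' h) ∧
    (NegHom.equiv f f' ↔
      ∀ m m' : P ⟶ Q,
        (NegHom.le f m ∧ ∀ g : P ⟶ Q, NegHom.le f g → NegHom.le g m) →
        (NegHom.le f' m' ∧ ∀ g : P ⟶ Q, NegHom.le f' g → NegHom.le g m') → m = m') := by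
  have tfae := tfae_eqvGen_le (fun g : P ⟶ Q => ⟨_, NegHom.isGreatest_greatestAbove g⟩) f f'
  exact ⟨tfae.out 0 1, tfae.out 0 2⟩

end Statements

end ReedyPaper
end
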